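/- arXiv:2601.00603 — 3 statements merged into one kernel-verified Lean document; each statement's English description precedes it below -/
import Mathlib

section
/- Let Y, W be integrable real random variables, D a {0,1}-valued random variable with P(D=1) > 0, and let h*, q* be measurable functions with q*(Z)·1_{D=0}·(Y - h*(W)) integrable. Define τ_dr = E[ (D/E[D] − q*(Z)(1-D)/E[D]) (Y − h*(W)) ]. Suppose the outcome bridge model is correct in the sense that E[1_{D=0}(Y − h*(W)) | Z] = 0 almost surely. Then τ_dr = E[ Y − h*(W) | D = 1 ]. -/
open MeasureTheory

/-! The second term of `τ_dr` is `E[q*(Z) · 1_{D=0}(Y − h*(W))] / E[D]`. Since `q*(Z)` is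
`σ(Z)`-measurable it can be pulled out of `E[· | Z]`, so by the tower property that term is
`E[q*(Z) · E[1_{D=0}(Y − h*(W)) | Z]] / E[D] = 0`, leaving `E[D (Y − h*(W))] / E[D]`. -/

theorem integral_mul_eq_zero_of_condExp_eq_zero {Ω : Type*} {m m₀ : MeasurableSpace Ω}
    {μ : Measure Ω} (hm : m ≤ m₀) [SigmaFinite (μ.trim hm)] {g f : Ω → ℝ}
    (hg : StronglyMeasurable[m] g) (hgf : Integrable (g * f) μ) (hf : Integrable f μ)
    (hcond : μ[f | m] =ᵐ[μ] 0) :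
    ∫ ω, g ω * f ω ∂μ = 0 := by
  have hcond_gf : μ[g * f | m] =ᵐ[μ] 0 := by
    filter_upwards [condExp_mul_of_stronglyMeasurable_left hg hgf hf, hcond] with ω hω hω0
    rw [hω, Pi.mul_apply, hω0, Pi.zero_apply, mul_zero]
  calc ∫ ω, g ω * f ω ∂μ = ∫ ω, (μ[g * f | m]) ω ∂μ := (integral_condExp hm).symm
    _ = 0 := by rw [integral_congr_ae hcond_gf, Pi.zero_def, integral_zero]

theorem MeasureTheory.Integrable.mul_of_forall_eq_zero_or_eq_one {Ω : Type*} [MeasurableSpace Ω]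
    {μ : Measure Ω} {D f : Ω → ℝ} (hf : Integrable f μ) (hD : AEStronglyMeasurable D μ)
    (hD01 : ∀ ω, D ω = 0 ∨ D ω = 1) :
    Integrable (fun ω => D ω * f ω) μ :=
  hf.bdd_mul hD (c := 1) <| .of_forall fun ω => by rcases hD01 ω with h | h <;> simp [h]

theorem stmt4_general {Ω γ : Type*} [MeasurableSpace Ω] [mγ : MeasurableSpace γ]
    {μ : Measure Ω} [IsProbabilityMeasure μ]
    (Y W D : Ω → ℝ) (Z : Ω → γ) (hstar : ℝ → ℝ) (qstar : γ → ℝ)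
    (hY : Integrable Y μ)
    (hD01 : ∀ ω, D ω = 0 ∨ D ω = 1)
    (hmD : Measurable D)
    (hmZ : Measurable Z) (hmq : Measurable qstar)
    (hhW : Integrable (fun ω => hstar (W ω)) μ)
    (hint : Integrable
      (fun ω => qstar (Z ω) * (if D ω = 0 then (1:ℝ) else 0) * (Y ω - hstar (W ω))) μ)
    -- correct outcome bridge model: E[1_{D=0}(Y − h*(W)) | Z] = 0 a.s.
    (hbridge : μ[(fun ω => (if D ω = 0 then (1:ℝ) else 0) * (Y ω - hstar (W ω))) |
        mγ.comap Z] =ᵐ[μ] 0) :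
    ∫ ω, (D ω / (∫ ω', D ω' ∂μ)
          - qstar (Z ω) * (1 - D ω) / (∫ ω', D ω' ∂μ)) * (Y ω - hstar (W ω)) ∂μ
      = (∫ ω, D ω * (Y ω - hstar (W ω)) ∂μ) / (∫ ω', D ω' ∂μ) := by
  have hind : ∀ ω, (if D ω = 0 then (1:ℝ) else 0) = 1 - D ω := fun ω => by
    rcases hD01 ω with h | h <;> simp [h]
  simp only [hind] at hint hbridge
  set c := ∫ ω', D ω' ∂μ
  set f := fun ω => Y ω - hstar (W ω)
  have hf : Integrable f μ := hY.sub hhW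
  have hDf := hf.mul_of_forall_eq_zero_or_eq_one hmD.aestronglyMeasurable hD01
  have hD'f := hf.mul_of_forall_eq_zero_or_eq_one (D := fun ω => 1 - D ω)
    (measurable_const.sub hmD).aestronglyMeasurable fun ω => by rcases hD01 ω with h | h <;> simp [h]
  have hqD'f : Integrable (fun ω => qstar (Z ω) * ((1 - D ω) * f ω)) μ :=
    hint.congr <| .of_forall fun ω => mul_assoc _ _ _
  have hsecond : ∫ ω, qstar (Z ω) * ((1 - D ω) * f ω) ∂μ = 0 :=
    integral_mul_eq_zero_of_condExp_eq_zero hmZ.comap_le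
      (hmq.comp (comap_measurable Z)).stronglyMeasurable hqD'f hD'f hbridge
  calc ∫ ω, (D ω / c - qstar (Z ω) * (1 - D ω) / c) * f ω ∂μ
      = ∫ ω, (D ω * f ω / c - qstar (Z ω) * ((1 - D ω) * f ω) / c) ∂μ :=
        integral_congr_ae <| .of_forall fun ω => by ring
    _ = (∫ ω, D ω * f ω ∂μ) / c - (∫ ω, qstar (Z ω) * ((1 - D ω) * f ω) ∂μ) / c := by
        rw [integral_sub (hDf.div_const c) (hqD'f.div_const c), integral_div, integral_div]
    _ = (∫ ω, D ω * f ω ∂μ) / c := by rw [hsecond, zero_div, sub_zero]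

/-- first half of Proposition 1 (double robustness under a correctly
specified outcome bridge h*): if E[1_{D=0}(Y − h*(W)) | Z] = 0 a.s., then
τ_dr = E[(D/E[D] − q*(Z)(1−D)/E[D])(Y − h*(W))] equals E[Y − h*(W) | D=1]. -/
theorem stmt4 {Ω γ : Type*} [MeasurableSpace Ω] [mγ : MeasurableSpace γ]
    {μ : Measure Ω} [IsProbabilityMeasure μ]
    (Y W D : Ω → ℝ) (Z : Ω → γ) (hstar : ℝ → ℝ) (qstar : γ → ℝ)
    (hY : Integrable Y μ) (hW : Integrable W μ)
    (hD01 : ∀ ω, D ω = 0 ∨ D ω = 1)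
    (hDpos : 0 < μ {ω | D ω = 1})
    (hmY : Measurable Y) (hmW : Measurable W) (hmD : Measurable D)
    (hmZ : Measurable Z) (hmh : Measurable hstar) (hmq : Measurable qstar)
    (hhW : Integrable (fun ω => hstar (W ω)) μ)
    (hint : Integrable
      (fun ω => qstar (Z ω) * (if D ω = 0 then (1:ℝ) else 0) * (Y ω - hstar (W ω))) μ)
    -- correct outcome bridge model: E[1_{D=0}(Y − h*(W)) | Z] = 0 a.s.
    (hbridge : μ[(fun ω => (if D ω = 0 then (1:ℝ) else 0) * (Y ω - hstar (W ω))) |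
        mγ.comap Z] =ᵐ[μ] 0) :
    ∫ ω, (D ω / (∫ ω', D ω' ∂μ)
          - qstar (Z ω) * (1 - D ω) / (∫ ω', D ω' ∂μ)) * (Y ω - hstar (W ω)) ∂μ
      = (∫ ω, D ω * (Y ω - hstar (W ω)) ∂μ) / (∫ ω', D ω' ∂μ) :=
  stmt4_general (mγ := mγ) Y W D Z hstar qstar hY hD01 hmD hmZ hmq hhW hint hbridge
end

section
/- Let Y, W be integrable real random variables, D a {0,1}-valued random variable with P(D=1) > 0, and let h*, q* be measurable functions with appropriate integrability. Define τ_dr = E[ (D/E[D] − q*(Z)(1-D)/E[D]) (Y − h*(W)) ]. Suppose the treatment bridge model is correct in the sense that E[ q*(Z) 1_{D=0} | W ] = E[ D | W ] almost surely. Then τ_dr = E[ (D/E[D] − q*(Z)(1-D)/E[D]) · Y ], i.e., the term involving h* vanishes regardless of h*. -/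
/-! Write `q₁ := q*(Z)·1_{D=0} = q*(Z)(1 - D)`. The integrand of `τ_dr` differs from the one on the
right by `(D - q₁) h*(W) / E[D]`, and `h*(W)` is `σ(W)`-measurable, so pulling it out of the
conditional expectation given `W` turns the bridge equation `E[q₁ | W] = E[D | W]` into
`E[q₁ h*(W)] = E[D h*(W)]`. -/

open MeasureTheory ProbabilityTheory

section

variable {Ω : Type*} {m m₀ : MeasurableSpace Ω} {μ : Measure Ω}

theorem integral_sub_eq_integral_of_integral_eq_zero {E : Type*} [NormedAddCommGroup E]
    [NormedSpace ℝ E] {f g : Ω → E} (hg : Integrable g μ) (hg₀ : ∫ x, g x ∂μ = 0) :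
    ∫ x, f x - g x ∂μ = ∫ x, f x ∂μ := by
  by_cases hf : Integrable f μ
  · rw [integral_sub hf hg, hg₀, sub_zero]
  · have hfg : ¬Integrable (fun x => f x - g x) μ := fun h =>
      hf ((h.add hg).congr (ae_of_all _ fun x => sub_add_cancel (f x) (g x)))
    rw [integral_undef hfg, integral_undef hf]

theorem integral_mul_eq_of_condExp_ae_eq (hm : m ≤ m₀) [SigmaFinite (μ.trim hm)]
    {g f₁ f₂ : Ω → ℝ} (hg : StronglyMeasurable[m] g) (hf₁ : Integrable f₁ μ)
    (hf₂ : Integrable f₂ μ) (hgf₁ : Integrable (g * f₁) μ) (hgf₂ : Integrable (g * f₂) μ)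
    (h : μ[f₁ | m] =ᵐ[μ] μ[f₂ | m]) :
    ∫ x, g x * f₁ x ∂μ = ∫ x, g x * f₂ x ∂μ :=
  calc ∫ x, g x * f₁ x ∂μ
      = ∫ x, (μ[g * f₁ | m]) x ∂μ := (integral_condExp hm).symm
    _ = ∫ x, g x * (μ[f₂ | m]) x ∂μ := by
        refine integral_congr_ae ?_
        filter_upwards [condExp_mul_of_stronglyMeasurable_left hg hgf₁ hf₁, h] with x hx hx'
        rw [hx, Pi.mul_apply, hx']
    _ = ∫ x, (μ[g * f₂ | m]) x ∂μ :=
        integral_congr_ae (condExp_mul_of_stronglyMeasurable_left hg hgf₂ hf₂).symm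
    _ = ∫ x, g x * f₂ x ∂μ := integral_condExp hm

end

theorem stmt5_general {Ω γ : Type*} [MeasurableSpace Ω]
    {μ : Measure Ω} [IsProbabilityMeasure μ]
    (Y W D : Ω → ℝ) (Z : Ω → γ) (hstar : ℝ → ℝ) (qstar : γ → ℝ)
    (hD01 : ∀ ω, D ω = 0 ∨ D ω = 1)
    (hmW : Measurable W) (hmD : Measurable D)
    (hmh : Measurable hstar)
    (hhW : Integrable (fun ω => hstar (W ω)) μ)
    (hint2 : Integrable
      (fun ω => qstar (Z ω) * (if D ω = 0 then (1:ℝ) else 0) * hstar (W ω)) μ)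
    (hint3 : Integrable (fun ω => qstar (Z ω) * (if D ω = 0 then (1:ℝ) else 0)) μ)
    -- correct treatment bridge model: E[q*(Z)1_{D=0} | W] = E[D | W] a.s.
    (hbridge : μ[(fun ω => qstar (Z ω) * (if D ω = 0 then (1:ℝ) else 0)) |
        MeasurableSpace.comap W inferInstance]
      =ᵐ[μ] μ[D | MeasurableSpace.comap W inferInstance]) :
    ∫ ω, (D ω / (∫ ω', D ω' ∂μ)
          - qstar (Z ω) * (1 - D ω) / (∫ ω', D ω' ∂μ)) * (Y ω - hstar (W ω)) ∂μ
      = ∫ ω, (D ω / (∫ ω', D ω' ∂μ)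
          - qstar (Z ω) * (1 - D ω) / (∫ ω', D ω' ∂μ)) * Y ω ∂μ := by
  set c := ∫ ω', D ω' ∂μ
  set q₁ : Ω → ℝ := fun ω => qstar (Z ω) * (if D ω = 0 then (1:ℝ) else 0)
  have hq₁ : ∀ ω, qstar (Z ω) * (1 - D ω) = q₁ ω := fun ω => by
    rcases hD01 ω with h | h <;> simp [q₁, h]
  have hD_le : ∀ ω, ‖D ω‖ ≤ 1 := fun ω => by rcases hD01 ω with h | h <;> simp [h]
  have hD : Integrable D μ :=
    (integrable_const (1:ℝ)).mono' hmD.aestronglyMeasurable (ae_of_all _ hD_le)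
  have hDh : Integrable (fun ω => hstar (W ω) * D ω) μ :=
    hhW.mul_bdd hmD.aestronglyMeasurable (ae_of_all _ hD_le)
  have hq₁h : Integrable (fun ω => hstar (W ω) * q₁ ω) μ :=
    hint2.congr (ae_of_all _ fun ω => mul_comm _ _)
  have hbalance : ∫ ω, hstar (W ω) * q₁ ω ∂μ = ∫ ω, hstar (W ω) * D ω ∂μ :=
    integral_mul_eq_of_condExp_ae_eq hmW.comap_le
      ((hmh.comp (Measurable.of_comap_le le_rfl)).stronglyMeasurable) hint3 hD hq₁h hDh hbridge
  have hterm : ∫ ω, (D ω / c - q₁ ω / c) * hstar (W ω) ∂μ = 0 := by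
    simp_rw [← sub_div, div_mul_eq_mul_div, sub_mul, mul_comm _ (hstar _)]
    rw [integral_div, integral_sub hDh hq₁h, hbalance, sub_self, zero_div]
  simp_rw [hq₁, mul_sub]
  refine integral_sub_eq_integral_of_integral_eq_zero ?_ hterm
  simp_rw [← sub_div, div_mul_eq_mul_div, sub_mul, mul_comm _ (hstar _)]
  exact (hDh.sub hq₁h).div_const c

/-- second half of Proposition 1 (double robustness under a correctly
specified treatment bridge q*): if E[q*(Z)1_{D=0} | W] = E[D | W] a.s., then the
h*-term in τ_dr vanishes regardless of h*:
τ_dr = E[(D/E[D] − q*(Z)(1−D)/E[D])·Y]. -/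
theorem stmt5 {Ω γ : Type*} [MeasurableSpace Ω] [mγ : MeasurableSpace γ]
    {μ : Measure Ω} [IsProbabilityMeasure μ]
    (Y W D : Ω → ℝ) (Z : Ω → γ) (hstar : ℝ → ℝ) (qstar : γ → ℝ)
    (hY : Integrable Y μ) (hW : Integrable W μ)
    (hD01 : ∀ ω, D ω = 0 ∨ D ω = 1)
    (hDpos : 0 < μ {ω | D ω = 1})
    (hmY : Measurable Y) (hmW : Measurable W) (hmD : Measurable D)
    (hmZ : Measurable Z) (hmh : Measurable hstar) (hmq : Measurable qstar)
    (hhW : Integrable (fun ω => hstar (W ω)) μ)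
    (hint1 : Integrable
      (fun ω => qstar (Z ω) * (if D ω = 0 then (1:ℝ) else 0) * (Y ω - hstar (W ω))) μ)
    (hint2 : Integrable
      (fun ω => qstar (Z ω) * (if D ω = 0 then (1:ℝ) else 0) * hstar (W ω)) μ)
    (hint3 : Integrable (fun ω => qstar (Z ω) * (if D ω = 0 then (1:ℝ) else 0)) μ)
    -- correct treatment bridge model: E[q*(Z)1_{D=0} | W] = E[D | W] a.s.
    (hbridge : μ[(fun ω => qstar (Z ω) * (if D ω = 0 then (1:ℝ) else 0)) |
        MeasurableSpace.comap W inferInstance]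
      =ᵐ[μ] μ[D | MeasurableSpace.comap W inferInstance]) :
    ∫ ω, (D ω / (∫ ω', D ω' ∂μ)
          - qstar (Z ω) * (1 - D ω) / (∫ ω', D ω' ∂μ)) * (Y ω - hstar (W ω)) ∂μ
      = ∫ ω, (D ω / (∫ ω', D ω' ∂μ)
          - qstar (Z ω) * (1 - D ω) / (∫ ω', D ω' ∂μ)) * Y ω ∂μ :=
  stmt5_general Y W D Z hstar qstar hD01 hmW hmD hmh hhW hint2 hint3 hbridge
end

section
/- Let Y, W, Z be random variables with Y, W integrable, D a {0,1}-valued random variable with P(D=1) > 0, and U a latent random variable. Assume: (i) W ⫫ D | U; (ii) Z ⫫ Y | (D,U) and Z ⫫ W | (D,U); (iii) there exists h with E[1_{D=0}(Y − h(W)) | U] = 0 a.s.; (iv) there exists q with E[1_{D=0} q(Z) | U] = E[D | U] a.s. Then the two identification formulas agree: E[ Y − h(W) | D=1 ] = E[D Y]/E[D] − E[(1−D) q(Z) Y]/E[D]. -/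
/-!
Let `F = σ(U)` and `G = σ(U, D)`. As `D` is binary, every `G`-measurable function agrees on
`{D = 0}` with a function of `U` (Doob–Dynkin), so on the untreated `E[q(Z) | G] = a(U)` and
`E[Y | G] = b(U)`. Taking the bridge equations down to `F` gives `a * P(D = 0 | U) = E[D | U]` and
`b * P(D = 0 | U) = E[h(W) | U] * P(D = 0 | U)`, the latter because `W ⫫ D | U` turns
`E[h(W) | G]` into `E[h(W) | U]`. Together with `Z ⫫ Y | G`, both `E[D h(W)]` and
`E[(1 - D) q(Z) Y]` reduce to `E[a b (1 - D)]`.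

The conditional independences are assumed only for bounded functions; they extend to integrable
ones by truncation, since conditional expectations of dominated truncations converge in measure.
-/

open MeasureTheory ProbabilityTheory Filter
open scoped Topology

theorem Measurable.truncation {α : Type*} [MeasurableSpace α] {f : α → ℝ} (hf : Measurable f)
    (A : ℝ) : Measurable (truncation f A) :=
  (measurable_id.indicator measurableSet_Ioc).comp hf

namespace ProbabilityTheory

variable {α : Type*}

theorem tendsto_truncation (f : α → ℝ) (x : α) :
    Tendsto (fun n : ℕ => truncation f n x) atTop (𝓝 (f x)) :=
  tendsto_const_nhds.congr' <| (tendsto_natCast_atTop_atTop.eventually_gt_atTop |f x|).mono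
    fun _ hn => (truncation_eq_self hn).symm

theorem truncation_mul_of_eq_zero_or_eq_one {e f : α → ℝ} (he : ∀ x, e x = 0 ∨ e x = 1)
    (A : ℝ) : truncation (e * f) A = e * truncation f A := by
  ext x
  rcases he x with hx | hx <;> simp [truncation, hx]

end ProbabilityTheory

namespace MeasureTheory

variable {α : Type*} {m m₀ : MeasurableSpace α} {μ : Measure α}

theorem TendstoInMeasure.mul [IsFiniteMeasure μ] {f g : ℕ → α → ℝ} {F G : α → ℝ}
    (hf_meas : ∀ n, AEStronglyMeasurable (f n) μ) (hg_meas : ∀ n, AEStronglyMeasurable (g n) μ)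
    (hf : TendstoInMeasure μ f atTop F) (hg : TendstoInMeasure μ g atTop G) :
    TendstoInMeasure μ (fun n => f n * g n) atTop (F * G) := by
  refine (exists_seq_tendstoInMeasure_atTop_iff fun n => (hf_meas n).mul (hg_meas n)).2
    fun ns hns => ?_
  obtain ⟨ns₁, hns₁, hf₁⟩ := (hf.comp hns.tendsto_atTop).exists_seq_tendsto_ae
  obtain ⟨ns₂, hns₂, hg₂⟩ := (hg.comp (hns.comp hns₁).tendsto_atTop).exists_seq_tendsto_ae
  refine ⟨ns₁ ∘ ns₂, hns₁.comp hns₂, ?_⟩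
  filter_upwards [hf₁, hg₂] with x hfx hgx
  exact (hfx.comp hns₂.tendsto_atTop).mul hgx

theorem tendstoInMeasure_condExp_of_dominated_convergence {E : Type*} [NormedAddCommGroup E]
    [NormedSpace ℝ E] [CompleteSpace E] (hm : m ≤ m₀) [SigmaFinite (μ.trim hm)]
    {fs : ℕ → α → E} {f : α → E} (bound : α → ℝ)
    (hfs_meas : ∀ n, AEStronglyMeasurable (fs n) μ) (h_int_bound : Integrable bound μ)
    (hfs_bound : ∀ n, ∀ᵐ x ∂μ, ‖fs n x‖ ≤ bound x)
    (hfs : ∀ᵐ x ∂μ, Tendsto (fun n => fs n x) atTop (𝓝 (f x))) :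
    TendstoInMeasure μ (fun n => μ[fs n | m]) atTop μ[f | m] :=
  (tendstoInMeasure_of_tendsto_Lp (p := 1) <| tendsto_condExpL1_of_dominated_convergence hm
    bound hfs_meas h_int_bound hfs_bound hfs).congr
    (fun _ => (condExp_ae_eq_condExpL1 hm _).symm) (condExp_ae_eq_condExpL1 hm f).symm

theorem integral_mul_condExp (hm : m ≤ m₀) [SigmaFinite (μ.trim hm)] {f g : α → ℝ}
    (hf : StronglyMeasurable[m] f) (hfg : Integrable (f * g) μ) (hg : Integrable g μ) :
    ∫ x, f x * μ[g | m] x ∂μ = ∫ x, f x * g x ∂μ :=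
  (integral_congr_ae (condExp_mul_of_stronglyMeasurable_left hf hfg hg).symm).trans
    (integral_condExp hm)

variable [IsFiniteMeasure μ]

theorem tendstoInMeasure_condExp_truncation (hm : m ≤ m₀) {f : α → ℝ} (hf : Integrable f μ) :
    TendstoInMeasure μ (fun n : ℕ => μ[truncation f n | m]) atTop μ[f | m] :=
  tendstoInMeasure_condExp_of_dominated_convergence hm (fun x => |f x|)
    (fun _ => hf.1.truncation) hf.abs
    (fun n => ae_of_all _ (abs_truncation_le_abs_self f n))
    (ae_of_all _ (tendsto_truncation f))

theorem condExp_ae_eq_of_truncation {m₁ m₂ : MeasurableSpace α} (hm₁ : m₁ ≤ m₀)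
    (hm₂ : m₂ ≤ m₀) {f : α → ℝ} (hf : Integrable f μ)
    (h : ∀ n : ℕ, μ[truncation f n | m₁] =ᵐ[μ] μ[truncation f n | m₂]) :
    μ[f | m₁] =ᵐ[μ] μ[f | m₂] :=
  tendstoInMeasure_ae_unique ((tendstoInMeasure_condExp_truncation hm₁ hf).congr_left h)
    (tendstoInMeasure_condExp_truncation hm₂ hf)

theorem condExp_mul_ae_eq_of_truncation (hm : m ≤ m₀) {f g : α → ℝ} (hf : Integrable f μ)
    (hg : Integrable g μ) (hfg : Integrable (f * g) μ)
    (h : ∀ n : ℕ, μ[truncation f n * truncation g n | m]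
      =ᵐ[μ] μ[truncation f n | m] * μ[truncation g n | m]) :
    μ[f * g | m] =ᵐ[μ] μ[f | m] * μ[g | m] := by
  have h_prod : TendstoInMeasure μ (fun n : ℕ => μ[truncation f n * truncation g n | m])
      atTop μ[f * g | m] :=
    tendstoInMeasure_condExp_of_dominated_convergence hm (fun x => |f x * g x|)
      (fun _ => hf.1.truncation.mul hg.1.truncation) hfg.abs
      (fun n => ae_of_all _ fun x => by
        rw [Pi.mul_apply, Real.norm_eq_abs, abs_mul, abs_mul]
        exact mul_le_mul (abs_truncation_le_abs_self f n x) (abs_truncation_le_abs_self g n x)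
          (abs_nonneg _) (abs_nonneg _))
      (ae_of_all _ fun x => (tendsto_truncation f x).mul (tendsto_truncation g x))
  exact tendstoInMeasure_ae_unique (h_prod.congr_left h) <|
    TendstoInMeasure.mul (fun _ => integrable_condExp.1) (fun _ => integrable_condExp.1)
      (tendstoInMeasure_condExp_truncation hm hf) (tendstoInMeasure_condExp_truncation hm hg)

theorem condExp_mul_mul_ae_eq_of_bound (hm : m ≤ m₀) {e f g : α → ℝ}
    (he : StronglyMeasurable[m] e) (c : ℝ) (he_bound : ∀ᵐ x ∂μ, ‖e x‖ ≤ c)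
    (hf : Integrable f μ) (hfg : Integrable (f * g) μ)
    (h : μ[f * g | m] =ᵐ[μ] μ[f | m] * μ[g | m]) :
    μ[e * f * g | m] =ᵐ[μ] μ[e * f | m] * μ[g | m] := by
  calc μ[e * f * g | m] = μ[e * (f * g) | m] := by rw [mul_assoc]
    _ =ᵐ[μ] e * (μ[f | m] * μ[g | m]) :=
      (condExp_stronglyMeasurable_mul_of_bound hm he hfg c he_bound).trans (.mul .rfl h)
    _ =ᵐ[μ] μ[e * f | m] * μ[g | m] := by
      rw [← mul_assoc]
      exact .mul (condExp_stronglyMeasurable_mul_of_bound hm he hf c he_bound).symm .rfl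

theorem condExp_indicator_mul_mul_ae_eq_of_truncation (hm : m ≤ m₀) {e f g : α → ℝ}
    (he : StronglyMeasurable[m] e) (he01 : ∀ x, e x = 0 ∨ e x = 1) (hf : Integrable f μ)
    (hg : Integrable g μ) (hefg : Integrable (e * f * g) μ)
    (h : ∀ n : ℕ, μ[truncation f n * truncation g n | m]
      =ᵐ[μ] μ[truncation f n | m] * μ[truncation g n | m]) :
    μ[e * f * g | m] =ᵐ[μ] μ[e * f | m] * μ[g | m] := by
  have he_bound : ∀ᵐ x ∂μ, ‖e x‖ ≤ 1 :=
    ae_of_all _ fun x => by rcases he01 x with hx | hx <;> simp [hx]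
  refine condExp_mul_ae_eq_of_truncation hm (hf.bdd_mul (he.mono hm).aestronglyMeasurable
    he_bound) hg hefg fun n => ?_
  rw [truncation_mul_of_eq_zero_or_eq_one he01]
  refine condExp_mul_mul_ae_eq_of_bound hm he 1 he_bound hf.1.integrable_truncation ?_ (h n)
  exact hg.1.integrable_truncation.bdd_mul hf.1.truncation
    (ae_of_all _ (abs_truncation_le_bound f n))

section Tower

variable {m₁ m₂ : MeasurableSpace α} (hm₁₂ : m₁ ≤ m₂) (hm₂ : m₂ ≤ m₀) {e : α → ℝ}
  (he : StronglyMeasurable[m₂] e) (c : ℝ) (he_bound : ∀ᵐ x ∂μ, ‖e x‖ ≤ c)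
include hm₁₂ hm₂ he he_bound

theorem condExp_mul_ae_eq_of_mul_condExp_ae_eq {f g : α → ℝ} (hf : Integrable f μ)
    (hg : StronglyMeasurable[m₁] g) (hfg : e * μ[f | m₂] =ᵐ[μ] e * g) :
    μ[e * f | m₁] =ᵐ[μ] g * μ[e | m₁] := by
  have he_int : Integrable e μ := .of_bound (he.mono hm₂).aestronglyMeasurable c he_bound
  have hge : e * μ[f | m₂] =ᵐ[μ] g * e := hfg.trans (.of_eq (mul_comm e g))
  calc μ[e * f | m₁] =ᵐ[μ] μ[μ[e * f | m₂] | m₁] := (condExp_condExp_of_le hm₁₂ hm₂).symm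
    _ =ᵐ[μ] μ[g * e | m₁] :=
      condExp_congr_ae ((condExp_stronglyMeasurable_mul_of_bound hm₂ he hf c he_bound).trans hge)
    _ =ᵐ[μ] g * μ[e | m₁] := condExp_mul_of_stronglyMeasurable_left hg
      ((integrable_condExp.bdd_mul (he.mono hm₂).aestronglyMeasurable he_bound).congr hge) he_int

theorem mul_condExp_ae_eq_of_condExp_mul_sub_ae_eq_zero {f g b : α → ℝ} (hf : Integrable f μ)
    (hg : Integrable g μ) (hg_cond : μ[g | m₂] =ᵐ[μ] μ[g | m₁]) (hb : StronglyMeasurable[m₁] b)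
    (hfb : e * μ[f | m₂] =ᵐ[μ] e * b) (h : μ[e * (f - g) | m₁] =ᵐ[μ] 0) :
    b * μ[e | m₁] =ᵐ[μ] μ[g | m₁] * μ[e | m₁] := by
  have he_meas : AEStronglyMeasurable[m₀] e μ := (he.mono hm₂).aestronglyMeasurable
  have h_sub : μ[e * (f - g) | m₁] =ᵐ[μ] μ[e * f | m₁] - μ[e * g | m₁] := by
    rw [mul_sub]
    exact condExp_sub (hf.bdd_mul he_meas he_bound) (hg.bdd_mul he_meas he_bound) m₁
  have hfg : μ[e * f | m₁] =ᵐ[μ] μ[e * g | m₁] := by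
    filter_upwards [h_sub, h] with x h_sub h
    exact sub_eq_zero.1 (h_sub.symm.trans h)
  exact (condExp_mul_ae_eq_of_mul_condExp_ae_eq hm₁₂ hm₂ he c he_bound hf hb hfb).symm.trans <|
    hfg.trans <| condExp_mul_ae_eq_of_mul_condExp_ae_eq hm₁₂ hm₂ he c he_bound hg
      stronglyMeasurable_condExp (.mul .rfl hg_cond)

theorem integral_mul_eq_integral_condExp_mul_condExp {f : α → ℝ} (hf : Integrable f μ)
    (hf_cond : μ[f | m₂] =ᵐ[μ] μ[f | m₁]) :
    ∫ x, e x * f x ∂μ = ∫ x, μ[f | m₁] x * μ[e | m₁] x ∂μ := by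
  have he_meas : AEStronglyMeasurable[m₀] e μ := (he.mono hm₂).aestronglyMeasurable
  calc ∫ x, e x * f x ∂μ = ∫ x, e x * μ[f | m₂] x ∂μ :=
        (integral_mul_condExp hm₂ he (hf.bdd_mul he_meas he_bound) hf).symm
    _ = ∫ x, μ[f | m₁] x * e x ∂μ := integral_congr_ae <| by
        filter_upwards [hf_cond] with x hx
        rw [hx, mul_comm]
    _ = ∫ x, μ[f | m₁] x * μ[e | m₁] x ∂μ := (integral_mul_condExp (hm₁₂.trans hm₂)
        stronglyMeasurable_condExp (integrable_condExp.mul_bdd he_meas he_bound)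
        (.of_bound he_meas c he_bound)).symm

end Tower

end MeasureTheory

theorem exists_comap_measurable_eqOn_fiber {Ω β δ : Type*} [mβ : MeasurableSpace β]
    [mδ : MeasurableSpace δ] {U : Ω → β} {D : Ω → δ} {ψ : Ω → ℝ}
    (hψ : Measurable[mβ.comap U ⊔ mδ.comap D] ψ) (d : δ) :
    ∃ a : Ω → ℝ, Measurable[mβ.comap U] a ∧ ∀ ω, D ω = d → a ω = ψ ω := by
  rw [← MeasurableSpace.comap_prodMk] at hψ
  obtain ⟨φ, hφ, rfl⟩ := hψ.exists_eq_measurable_comp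
  exact ⟨fun ω => φ (U ω, d), (hφ.comp measurable_prodMk_right).comp (comap_measurable U),
    fun ω hω => by simp [hω]⟩

theorem integral_mul_outcomeBridge_eq_integral_treatmentBridge {Ω β : Type*}
    [m₀ : MeasurableSpace Ω] [mβ : MeasurableSpace β] {μ : Measure Ω} [IsFiniteMeasure μ]
    {U : Ω → β} {D Y QZ HW : Ω → ℝ} (hmU : Measurable U) (hmD : Measurable D)
    (hD : ∀ ω, D ω = 0 ∨ D ω = 1) (hY : Integrable Y μ) (hQZ : Integrable QZ μ)
    (hHW : Integrable HW μ)
    (hHW_cond : μ[HW | mβ.comap U ⊔ MeasurableSpace.comap D inferInstance]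
      =ᵐ[μ] μ[HW | mβ.comap U])
    (hQZY : μ[(1 - D) * QZ * Y | mβ.comap U ⊔ MeasurableSpace.comap D inferInstance]
      =ᵐ[μ] μ[(1 - D) * QZ | mβ.comap U ⊔ MeasurableSpace.comap D inferInstance]
        * μ[Y | mβ.comap U ⊔ MeasurableSpace.comap D inferInstance])
    (hbridge_h : μ[(1 - D) * (Y - HW) | mβ.comap U] =ᵐ[μ] 0)
    (hbridge_q : μ[(1 - D) * QZ | mβ.comap U] =ᵐ[μ] μ[D | mβ.comap U]) :
    ∫ ω, D ω * HW ω ∂μ = ∫ ω, (1 - D ω) * QZ ω * Y ω ∂μ := by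
  set F := mβ.comap U
  set G := F ⊔ MeasurableSpace.comap D inferInstance
  have hF : F ≤ m₀ := hmU.comap_le
  have hG : G ≤ m₀ := sup_le hF hmD.comap_le
  have hDG : StronglyMeasurable[G] D :=
    ((comap_measurable D).mono (le_sup_right (a := F)) le_rfl).stronglyMeasurable
  have hEG : StronglyMeasurable[G] (1 - D) := stronglyMeasurable_const.sub hDG
  have hD_bound : ∀ᵐ ω ∂μ, ‖D ω‖ ≤ 1 :=
    ae_of_all _ fun ω => by rcases hD ω with h | h <;> simp [h]
  have hE_bound : ∀ᵐ ω ∂μ, ‖(1 - D) ω‖ ≤ 1 :=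
    ae_of_all _ fun ω => by rcases hD ω with h | h <;> simp [h]
  obtain ⟨a, ha, ha_eq⟩ := exists_comap_measurable_eqOn_fiber
    (stronglyMeasurable_condExp (μ := μ) (m := G) (f := QZ)).measurable 0
  obtain ⟨b, hb, hb_eq⟩ := exists_comap_measurable_eqOn_fiber
    (stronglyMeasurable_condExp (μ := μ) (m := G) (f := Y)).measurable 0
  have h_untreated : ∀ ω, (1 - D ω) * μ[QZ | G] ω = (1 - D ω) * a ω ∧
      (1 - D ω) * μ[Y | G] ω = (1 - D ω) * b ω := fun ω => by
    rcases hD ω with h | h <;> simp [h, ha_eq ω, hb_eq ω]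
  have ha_D : a * μ[1 - D | F] =ᵐ[μ] μ[D | F] :=
    (condExp_mul_ae_eq_of_mul_condExp_ae_eq le_sup_left hG hEG 1 hE_bound hQZ
      ha.stronglyMeasurable (.of_eq (funext fun ω => (h_untreated ω).1))).symm.trans hbridge_q
  have hb_HW : b * μ[1 - D | F] =ᵐ[μ] μ[HW | F] * μ[1 - D | F] :=
    mul_condExp_ae_eq_of_condExp_mul_sub_ae_eq_zero le_sup_left hG hEG 1 hE_bound hY hHW
      hHW_cond hb.stronglyMeasurable (.of_eq (funext fun ω => (h_untreated ω).2)) hbridge_h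
  have hab : a * b * (1 - D) =ᵐ[μ] μ[(1 - D) * QZ * Y | G] := by
    have h_treated : a * b * (1 - D) = (1 - D) * μ[QZ | G] * μ[Y | G] := funext fun ω => by
      rcases hD ω with h | h <;> simp [h, ha_eq ω, hb_eq ω]
    rw [h_treated]
    exact ((condExp_stronglyMeasurable_mul_of_bound hG hEG hQZ 1 hE_bound).symm.mul .rfl).trans
      hQZY.symm
  calc ∫ ω, D ω * HW ω ∂μ = ∫ ω, μ[HW | F] ω * μ[D | F] ω ∂μ :=
        integral_mul_eq_integral_condExp_mul_condExp le_sup_left hG hDG 1 hD_bound hHW hHW_cond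
    _ = ∫ ω, a ω * b ω * μ[1 - D | F] ω ∂μ := integral_congr_ae <| by
        filter_upwards [ha_D, hb_HW] with ω ha_D hb_HW
        simp only [Pi.mul_apply] at ha_D hb_HW
        rw [← ha_D]
        linear_combination (-a ω) * hb_HW
    _ = ∫ ω, a ω * b ω * (1 - D ω) ∂μ :=
        integral_mul_condExp hF (ha.mul hb).stronglyMeasurable (integrable_condExp.congr hab.symm)
          ((integrable_const 1).sub (.of_bound hmD.aestronglyMeasurable 1 hD_bound))
    _ = ∫ ω, μ[(1 - D) * QZ * Y | G] ω ∂μ := integral_congr_ae hab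
    _ = ∫ ω, (1 - D ω) * QZ ω * Y ω ∂μ := integral_condExp hG

theorem stmt15_general {Ω β γ : Type*} [MeasurableSpace Ω] [mβ : MeasurableSpace β]
    [mγ : MeasurableSpace γ] {μ : Measure Ω} [IsProbabilityMeasure μ]
    (Y W D : Ω → ℝ) (U : Ω → β) (Z : Ω → γ) (h : ℝ → ℝ) (q : γ → ℝ)
    (hY : Integrable Y μ)
    (hD01 : ∀ ω, D ω = 0 ∨ D ω = 1)
    (hmD : Measurable D)
    (hmU : Measurable U)
    (hmh : Measurable h) (hmq : Measurable q)
    (hhW : Integrable (fun ω => h (W ω)) μ)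
    (hqZY : Integrable (fun ω => (1 - D ω) * q (Z ω) * Y ω) μ)
    (hDY : Integrable (fun ω => D ω * Y ω) μ)
    (hqZ : Integrable (fun ω => q (Z ω)) μ)
    -- (i) W ⫫ D | U
    (hWD : ∀ f : ℝ → ℝ, Measurable f → (∃ Cf, ∀ x, |f x| ≤ Cf) →
      μ[(fun ω => f (W ω)) |
          (mβ.comap U ⊔ MeasurableSpace.comap D inferInstance)]
        =ᵐ[μ] μ[(fun ω => f (W ω)) | mβ.comap U])
    -- (ii) Z ⫫ Y | (D,U)
    (hZY : ∀ (f : γ → ℝ) (g : ℝ → ℝ), Measurable f → Measurable g →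
      (∃ Cf, ∀ x, |f x| ≤ Cf) → (∃ Cg, ∀ x, |g x| ≤ Cg) →
      μ[(fun ω => f (Z ω) * g (Y ω)) |
          (mβ.comap U ⊔ MeasurableSpace.comap D inferInstance)]
        =ᵐ[μ] (fun ω =>
          ((μ[(fun ω' => f (Z ω')) |
              (mβ.comap U ⊔ MeasurableSpace.comap D inferInstance)]) ω) *
          ((μ[(fun ω' => g (Y ω')) |
              (mβ.comap U ⊔ MeasurableSpace.comap D inferInstance)]) ω)))
    -- (iii) outcome bridge: E[1_{D=0}(Y − h(W)) | U] = 0 a.s.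
    (hbridgeh : μ[(fun ω => (if D ω = 0 then (1:ℝ) else 0) * (Y ω - h (W ω))) |
        mβ.comap U] =ᵐ[μ] 0)
    -- (iv) treatment bridge: E[1_{D=0} q(Z) | U] = E[D | U] a.s.
    (hbridgeq : μ[(fun ω => (if D ω = 0 then (1:ℝ) else 0) * q (Z ω)) | mβ.comap U]
        =ᵐ[μ] μ[D | mβ.comap U]) :
    (∫ ω, D ω * (Y ω - h (W ω)) ∂μ) / (∫ ω, D ω ∂μ)
      = (∫ ω, D ω * Y ω ∂μ) / (∫ ω, D ω ∂μ)
        - (∫ ω, (1 - D ω) * q (Z ω) * Y ω ∂μ) / (∫ ω, D ω ∂μ) := by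
  have hE01 : ∀ ω, 1 - D ω = 0 ∨ 1 - D ω = 1 := fun ω => by
    rcases hD01 ω with hD | hD <;> simp [hD]
  have hE : ∀ ω, (if D ω = 0 then (1 : ℝ) else 0) = 1 - D ω := fun ω => by
    rcases hD01 ω with hD | hD <;> simp [hD]
  simp only [hE] at hbridgeh hbridgeq
  have hF : mβ.comap U ≤ ‹MeasurableSpace Ω› := hmU.comap_le
  have hG : mβ.comap U ⊔ MeasurableSpace.comap D inferInstance ≤ ‹MeasurableSpace Ω› :=
    sup_le hF hmD.comap_le
  have hW_cond := condExp_ae_eq_of_truncation hG hF hhW fun n =>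
    hWD (truncation h n) (hmh.truncation n) ⟨_, abs_truncation_le_bound h n⟩
  have hZY_cond := condExp_indicator_mul_mul_ae_eq_of_truncation hG
    (stronglyMeasurable_const.sub ((comap_measurable D).mono (le_sup_right (a := mβ.comap U))
      le_rfl).stronglyMeasurable)
    hE01 hqZ hY hqZY fun n =>
    hZY (truncation q n) (truncation id n) (hmq.truncation n) (measurable_id.truncation n)
      ⟨_, abs_truncation_le_bound q n⟩ ⟨_, abs_truncation_le_bound id n⟩
  have h_bridges := integral_mul_outcomeBridge_eq_integral_treatmentBridge hmU hmD hD01 hY hqZ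
    hhW hW_cond hZY_cond hbridgeh hbridgeq
  have hDhW : Integrable (fun ω => D ω * h (W ω)) μ := hhW.bdd_mul hmD.aestronglyMeasurable
    (c := 1) (ae_of_all _ fun ω => by rcases hD01 ω with hD | hD <;> simp [hD])
  simp_rw [mul_sub]
  rw [integral_sub hDY hDhW, h_bridges, sub_div]

/-- agreement of the outcome-bridge and treatment-bridge
identifications (Theorems 1 and 2 combined): under the negative control conditional
independences and existence of both bridges h and q,
E[Y − h(W) | D=1] = E[DY]/E[D] − E[(1−D)q(Z)Y]/E[D]. -/
theorem stmt15 {Ω β γ : Type*} [MeasurableSpace Ω] [mβ : MeasurableSpace β]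
    [mγ : MeasurableSpace γ] {μ : Measure Ω} [IsProbabilityMeasure μ]
    (Y W D : Ω → ℝ) (U : Ω → β) (Z : Ω → γ) (h : ℝ → ℝ) (q : γ → ℝ)
    (hY : Integrable Y μ) (hW : Integrable W μ)
    (hD01 : ∀ ω, D ω = 0 ∨ D ω = 1)
    (hDpos : 0 < μ {ω | D ω = 1})
    (hmY : Measurable Y) (hmW : Measurable W) (hmD : Measurable D)
    (hmU : Measurable U) (hmZ : Measurable Z)
    (hmh : Measurable h) (hmq : Measurable q)
    (hhW : Integrable (fun ω => h (W ω)) μ)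
    (hqZY : Integrable (fun ω => (1 - D ω) * q (Z ω) * Y ω) μ)
    (hDY : Integrable (fun ω => D ω * Y ω) μ)
    (hqZ : Integrable (fun ω => q (Z ω)) μ)
    -- (i) W ⫫ D | U
    (hWD : ∀ f : ℝ → ℝ, Measurable f → (∃ Cf, ∀ x, |f x| ≤ Cf) →
      μ[(fun ω => f (W ω)) |
          (mβ.comap U ⊔ MeasurableSpace.comap D inferInstance)]
        =ᵐ[μ] μ[(fun ω => f (W ω)) | mβ.comap U])
    -- (ii) Z ⫫ Y | (D,U)
    (hZY : ∀ (f : γ → ℝ) (g : ℝ → ℝ), Measurable f → Measurable g →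
      (∃ Cf, ∀ x, |f x| ≤ Cf) → (∃ Cg, ∀ x, |g x| ≤ Cg) →
      μ[(fun ω => f (Z ω) * g (Y ω)) |
          (mβ.comap U ⊔ MeasurableSpace.comap D inferInstance)]
        =ᵐ[μ] (fun ω =>
          ((μ[(fun ω' => f (Z ω')) |
              (mβ.comap U ⊔ MeasurableSpace.comap D inferInstance)]) ω) *
          ((μ[(fun ω' => g (Y ω')) |
              (mβ.comap U ⊔ MeasurableSpace.comap D inferInstance)]) ω)))
    -- (ii') Z ⫫ W | (D,U)
    (hZW : ∀ (f : γ → ℝ) (g : ℝ → ℝ), Measurable f → Measurable g →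
      (∃ Cf, ∀ x, |f x| ≤ Cf) → (∃ Cg, ∀ x, |g x| ≤ Cg) →
      μ[(fun ω => f (Z ω) * g (W ω)) |
          (mβ.comap U ⊔ MeasurableSpace.comap D inferInstance)]
        =ᵐ[μ] (fun ω =>
          ((μ[(fun ω' => f (Z ω')) |
              (mβ.comap U ⊔ MeasurableSpace.comap D inferInstance)]) ω) *
          ((μ[(fun ω' => g (W ω')) |
              (mβ.comap U ⊔ MeasurableSpace.comap D inferInstance)]) ω)))
    -- (iii) outcome bridge: E[1_{D=0}(Y − h(W)) | U] = 0 a.s.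
    (hbridgeh : μ[(fun ω => (if D ω = 0 then (1:ℝ) else 0) * (Y ω - h (W ω))) |
        mβ.comap U] =ᵐ[μ] 0)
    -- (iv) treatment bridge: E[1_{D=0} q(Z) | U] = E[D | U] a.s.
    (hbridgeq : μ[(fun ω => (if D ω = 0 then (1:ℝ) else 0) * q (Z ω)) | mβ.comap U]
        =ᵐ[μ] μ[D | mβ.comap U]) :
    (∫ ω, D ω * (Y ω - h (W ω)) ∂μ) / (∫ ω, D ω ∂μ)
      = (∫ ω, D ω * Y ω ∂μ) / (∫ ω, D ω ∂μ)
        - (∫ ω, (1 - D ω) * q (Z ω) * Y ω ∂μ) / (∫ ω, D ω ∂μ) :=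
  stmt15_general (mβ := mβ) (mγ := mγ) Y W D U Z h q hY hD01 hmD hmU hmh hmq hhW hqZY hDY hqZ hWD
    hZY hbridgeh hbridgeq
end
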